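/- The graded vector space ℚ[π²] ⊗ U𝓕(3,5,7,...)^∨ (where π² has degree 2 and U𝓕(3,5,...)^∨ is spanned by words in letters f₃, f₅, f₇,... of odd degrees ≥ 3) has the same Poincaré series as U𝓕(2,3)^∨, spanned by words in letters of degrees 2 and 3. Equivalently, for every k ≥ 0, the number of pairs (n, w) with n ≥ 0 and w a word in odd letters ≥ 3 such that 2n + deg(w) = k equals the number of words in letters of degrees 2 and 3 of total degree k. -/
import Mathlib


/-- The weight of a word in the two-letter alphabet {p, g} of weights 2 and 3. -/
def wordWeight23 (w : List Bool) : ℕ :=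
  (w.map (fun b => if b then 3 else 2)).sum

def encL : List ℕ → List Bool
  | [] => []
  | a :: l => true :: (List.replicate ((a - 3) / 2) false ++ encL l)

def encodeW (p : ℕ × List ℕ) : List Bool :=
  List.replicate p.1 false ++ encL p.2

def decodeW : List Bool → ℕ × List ℕ
  | [] => (0, [])
  | false :: rest => ((decodeW rest).1 + 1, (decodeW rest).2)
  | true :: rest => (0, (3 + 2 * (decodeW rest).1) :: (decodeW rest).2)

lemma ww_cons (b : Bool) (w : List Bool) :
    wordWeight23 (b :: w) = (if b then 3 else 2) + wordWeight23 w := by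
  simp [wordWeight23]

lemma ww_replicate_append (n : ℕ) (w : List Bool) :
    wordWeight23 (List.replicate n false ++ w) = 2 * n + wordWeight23 w := by
  induction n with
  | zero => simp
  | succ n ih => simp [List.replicate_succ, ww_cons, ih]; ring

lemma odd_recover {a : ℕ} (ha : Odd a) (h3 : 3 ≤ a) : 3 + 2 * ((a - 3) / 2) = a := by
  obtain ⟨m, rfl⟩ := ha
  omega

lemma decode_replicate (n : ℕ) (w : List Bool) :
    decodeW (List.replicate n false ++ w) = ((decodeW w).1 + n, (decodeW w).2) := by
  induction n with
  | zero => simp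
  | succ n ih => simp [List.replicate_succ, decodeW, ih]; omega

lemma decode_encL (l : List ℕ) (h : ∀ x ∈ l, Odd x ∧ 3 ≤ x) :
    decodeW (encL l) = (0, l) := by
  induction l with
  | nil => rfl
  | cons a l ih =>
    have ha := h a (by simp)
    simp only [encL, decodeW, decode_replicate, ih (fun x hx => h x (by simp [hx]))]
    simp [odd_recover ha.1 ha.2]

lemma decode_encode (p : ℕ × List ℕ) (h : ∀ x ∈ p.2, Odd x ∧ 3 ≤ x) :
    decodeW (encodeW p) = p := by
  obtain ⟨n, l⟩ := p
  simp [encodeW, decode_replicate, decode_encL l h]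

lemma encode_decode (w : List Bool) : encodeW (decodeW w) = w := by
  induction w with
  | nil => rfl
  | cons b r ih =>
    cases b with
    | false =>
      simp only [decodeW, encodeW] at ih ⊢
      rw [List.replicate_succ]
      simpa using ih
    | true =>
      simp only [decodeW, encodeW, encL, List.replicate_zero, List.nil_append]
      have : (3 + 2 * (decodeW r).1 - 3) / 2 = (decodeW r).1 := by omega
      rw [this]
      simpa [encodeW] using ih

lemma decode_mem (w : List Bool) : ∀ x ∈ (decodeW w).2, Odd x ∧ 3 ≤ x := by
  induction w with
  | nil => simp [decodeW]
  | cons b r ih =>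
    cases b with
    | false => simpa [decodeW] using ih
    | true =>
      intro x hx
      simp only [decodeW, List.mem_cons] at hx
      rcases hx with rfl | hx
      · exact ⟨⟨(decodeW r).1 + 1, by ring⟩, by omega⟩
      · exact ih x hx

lemma decode_weight (w : List Bool) :
    2 * (decodeW w).1 + (decodeW w).2.sum = wordWeight23 w := by
  induction w with
  | nil => rfl
  | cons b r ih =>
    cases b with
    | false => simp [decodeW, ww_cons]; omega
    | true => simp [decodeW, ww_cons]; omega

lemma ww_encL (l : List ℕ) (h : ∀ x ∈ l, Odd x ∧ 3 ≤ x) :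
    wordWeight23 (encL l) = l.sum := by
  induction l with
  | nil => rfl
  | cons a l ih =>
    have ha := h a (by simp)
    simp only [encL, ww_cons, if_true, ww_replicate_append,
      ih (fun x hx => h x (by simp [hx])), List.sum_cons]
    have := odd_recover ha.1 ha.2
    omega

lemma ww_encode (p : ℕ × List ℕ) (h : ∀ x ∈ p.2, Odd x ∧ 3 ≤ x) :
    wordWeight23 (encodeW p) = 2 * p.1 + p.2.sum := by
  simp [encodeW, ww_replicate_append, ww_encL p.2 h]

/-- For each k, the number of pairs (n, w) where n ≥ 0 and w is a word in letters of
odd weights ≥ 3 with 2n + weight(w) = k equals the number of words in letters of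
weights 2 and 3 of total weight k: the Poincaré series of ℚ[π²] ⊗ U𝓕(3,5,...)^∨ and
of U𝓕(2,3)^∨ agree. -/
theorem stmt_6 (k : ℕ) :
    Nat.card {p : ℕ × List ℕ //
        (∀ x ∈ p.2, Odd x ∧ 3 ≤ x) ∧ 2 * p.1 + p.2.sum = k} =
      Nat.card {w : List Bool // wordWeight23 w = k} := by
  apply Nat.card_congr
  refine ⟨fun p => ⟨encodeW p.1, by rw [ww_encode p.1 p.2.1]; exact p.2.2⟩,
    fun w => ⟨decodeW w.1, decode_mem w.1, by rw [decode_weight]; exact w.2⟩,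
    fun p => ?_, fun w => ?_⟩
  · exact Subtype.ext (decode_encode p.1 p.2.1)
  · exact Subtype.ext (encode_decode w.1)
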